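/- With u orthonormal on p, the dual recurrence n_i Q_n(x;u) = ∑_{j,l=1}^d x_j u_j^{(i)} u_l^{(i)} p_l Q_n(x - e_j + e_l; u) holds for each i = 0,…,d-1 and each x with |x| = N (where n is indexed by n^+ = (n_0,…,n_{d-1}) with |n^+| = N). -/

import Mathlib

open MvPolynomial

/-- Multivariate Krawtchouk polynomial `Q_n(x;u)`. -/
noncomputable def QK (d : ℕ) [NeZero d] (u : Fin d → Fin d → ℝ) (n x : Fin d → ℕ) : ℝ :=
  MvPolynomial.coeff (Finsupp.equivFunOnFinite.symm n)
    (∏ j, (1 + ∑ l ∈ Finset.univ.erase 0, MvPolynomial.X l * MvPolynomial.C (u l j)) ^ x j)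

/-!
Write `φ_j(w) = 1 + ∑_{l ≠ 0} u_l(j) w_l` and `F_x = ∏_j φ_j ^ x_j`, so that `Q_n(x)` is the
`w^n`-coefficient of `F_x`. Orthonormality with `u_0 ≡ 1` gives `∑_l u_i(l) p_l φ_l = w_i`
(`= 1` for `i = 0`), and `F_{x - e_j + e_l} = φ_l F_{x - e_j}`, so the right-hand side is the
`w^n`-coefficient of `w_i ∑_j x_j u_i(j) F_{x - e_j} = w_i ∂_i F_x`, which is `n_i Q_n(x)`.
For `i = 0` the same computation gives the Euler-type identity
`∑_{m ≠ 0} w_m ∂_m F_x = ∑_j x_j (F_x - F_{x - e_j})`, whose coefficient is `|n| Q_n(x)`.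
-/

open Finset

theorem Derivation.leibniz_finset_prod {R A M ι : Type*} [CommSemiring R] [CommSemiring A]
    [Algebra R A] [AddCommMonoid M] [Module A M] [Module R M] [DecidableEq ι]
    (D : Derivation R A M) (s : Finset ι) (f : ι → A) :
    D (∏ j ∈ s, f j) = ∑ j ∈ s, (∏ m ∈ s.erase j, f m) • D (f j) := by
  induction s using Finset.induction_on with
  | empty => simp
  | @insert a s ha ih =>
    rw [prod_insert ha, D.leibniz, ih, sum_insert ha, erase_insert ha, smul_sum, add_comm]
    congr 1
    refine sum_congr rfl fun j hj => ?_
    rw [erase_insert_of_ne (ne_of_mem_of_not_mem hj ha).symm,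
      prod_insert fun h => ha (mem_of_mem_erase h), mul_smul]

theorem MvPolynomial.coeff_X_mul_pderiv {R σ : Type*} [CommSemiring R] (m : σ →₀ ℕ) (i : σ)
    (f : MvPolynomial σ R) : coeff m (X i * pderiv i f) = m i * coeff m f := by
  classical
  rw [coeff_X_mul']
  split_ifs with h
  · have hm : 1 ≤ m i := Nat.one_le_iff_ne_zero.mpr (Finsupp.mem_support_iff.mp h)
    rw [coeff_pderiv, tsub_add_cancel_of_le (Finsupp.single_le_iff.mpr hm), mul_comm,
      Finsupp.tsub_apply, Finsupp.single_eq_same, ← Nat.cast_add_one, Nat.sub_add_cancel hm]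
  · rw [Finsupp.notMem_support_iff.mp h, Nat.cast_zero, zero_mul]

section Krawtchouk

variable {d : ℕ} [NeZero d] (u : Fin d → Fin d → ℝ)

noncomputable def krawtchoukFactor (j : Fin d) : MvPolynomial (Fin d) ℝ :=
  1 + ∑ l ∈ univ.erase 0, X l * C (u l j)

noncomputable def krawtchoukGen (x : Fin d → ℕ) : MvPolynomial (Fin d) ℝ :=
  ∏ j, krawtchoukFactor u j ^ x j

theorem QK_eq_coeff_krawtchoukGen (n x : Fin d → ℕ) :
    QK d u n x = coeff (Finsupp.equivFunOnFinite.symm n) (krawtchoukGen u x) := rfl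

theorem pderiv_krawtchoukFactor {i : Fin d} (hi : i ≠ 0) (j : Fin d) :
    pderiv i (krawtchoukFactor u j) = C (u i j) := by
  simp [krawtchoukFactor, pderiv_X, Pi.single_apply, hi]

theorem krawtchoukGen_add_single (y : Fin d → ℕ) (l : Fin d) :
    krawtchoukGen u (fun m => y m + if m = l then 1 else 0) =
      krawtchoukFactor u l * krawtchoukGen u y := by
  simp only [krawtchoukGen, pow_add, pow_ite, pow_one, pow_zero, prod_mul_distrib, prod_ite_eq',
    mem_univ, if_true, mul_comm]

theorem krawtchoukFactor_mul_krawtchoukGen_sub_single {y : Fin d → ℕ} {j : Fin d}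
    (hy : y j ≠ 0) :
    krawtchoukFactor u j * krawtchoukGen u (fun m => y m - if m = j then 1 else 0) =
      krawtchoukGen u y := by
  rw [← krawtchoukGen_add_single]
  congr 1
  funext m
  split_ifs with h
  · subst h; omega
  · rfl

theorem pderiv_krawtchoukGen {i : Fin d} (hi : i ≠ 0) (x : Fin d → ℕ) :
    pderiv i (krawtchoukGen u x) =
      ∑ j, (x j * u i j : ℝ) • krawtchoukGen u (fun m => x m - if m = j then 1 else 0) := by
  rw [krawtchoukGen, Derivation.leibniz_finset_prod]
  refine sum_congr rfl fun j _ => ?_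
  have hsub : krawtchoukGen u (fun m => x m - if m = j then 1 else 0) =
      krawtchoukFactor u j ^ (x j - 1) * ∏ m ∈ univ.erase j, krawtchoukFactor u m ^ x m := by
    rw [krawtchoukGen, ← mul_prod_erase univ _ (mem_univ j), if_pos rfl]
    congr 1
    exact prod_congr rfl fun m hm => by rw [if_neg (ne_of_mem_erase hm), Nat.sub_zero]
  rw [hsub, Derivation.leibniz_pow, pderiv_krawtchoukFactor u hi, smul_eq_mul, smul_eq_mul,
    nsmul_eq_mul, smul_eq_C_mul, C_mul, ← C_eq_coe_nat]
  ring

theorem sum_X_mul_pderiv_krawtchoukGen (x : Fin d → ℕ) :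
    ∑ m ∈ univ.erase 0, X m * pderiv m (krawtchoukGen u x) =
      ∑ j, (x j : ℝ) • (krawtchoukGen u x -
        krawtchoukGen u (fun m => x m - if m = j then 1 else 0)) := by
  set G := fun j => krawtchoukGen u (fun m => x m - if m = j then 1 else 0)
  have hterm : ∀ j, ∑ m ∈ univ.erase 0, X m * (x j * u m j : ℝ) • G j =
      (x j : ℝ) • ((krawtchoukFactor u j - 1) * G j) := by
    intro j
    rw [krawtchoukFactor, add_sub_cancel_left, sum_mul, smul_sum]
    refine sum_congr rfl fun m _ => ?_
    rw [mul_smul, smul_eq_C_mul (u m j • G j), smul_eq_C_mul, smul_eq_C_mul]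
    ring
  calc ∑ m ∈ univ.erase 0, X m * pderiv m (krawtchoukGen u x)
      = ∑ j, ∑ m ∈ univ.erase 0, X m * (x j * u m j : ℝ) • G j := by
        rw [sum_comm]
        refine sum_congr rfl fun m hm => ?_
        rw [pderiv_krawtchoukGen u (ne_of_mem_erase hm), mul_sum]
    _ = ∑ j, (x j : ℝ) • (krawtchoukGen u x - G j) := by
        refine sum_congr rfl fun j _ => ?_
        rw [hterm]
        by_cases hxj : x j = 0
        · simp [hxj]
        · rw [sub_mul, one_mul, krawtchoukFactor_mul_krawtchoukGen_sub_single u hxj]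

theorem sum_C_mul_krawtchoukFactor {p : Fin d → ℝ} (hu0 : ∀ j, u 0 j = 1)
    (horth : ∀ l m, ∑ i, u l i * u m i * p i = if l = m then (1 : ℝ) else 0) (i : Fin d) :
    ∑ l, C (u i l * p l) * krawtchoukFactor u l = if i = 0 then 1 else X i := by
  have hexpand : ∑ l, C (u i l * p l) * krawtchoukFactor u l =
      C (∑ l, u 0 l * u i l * p l) + ∑ m ∈ univ.erase 0, X m * C (∑ l, u m l * u i l * p l) := by
    simp only [krawtchoukFactor, mul_add, mul_one, mul_sum, sum_add_distrib, map_sum, hu0,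
      one_mul]
    rw [sum_comm]
    congr 1
    refine sum_congr rfl fun m _ => sum_congr rfl fun l _ => ?_
    simp only [map_mul]
    ring
  simp only [hexpand, horth, apply_ite C, map_one, map_zero, mul_ite, mul_one, mul_zero]
  rcases eq_or_ne i 0 with rfl | hi
  · rw [if_pos rfl, if_pos rfl, sum_ite_eq', if_neg (notMem_erase 0 univ), add_zero]
  · rw [if_neg hi.symm, if_neg hi, sum_ite_eq', if_pos (mem_erase.mpr ⟨hi, mem_univ i⟩),
      zero_add]

theorem sum_mul_QK_sub_single_add_single {p : Fin d → ℝ} (hu0 : ∀ j, u 0 j = 1)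
    (horth : ∀ l m, ∑ i, u l i * u m i * p i = if l = m then (1 : ℝ) else 0)
    (n x : Fin d → ℕ) (i j : Fin d) :
    ∑ l, u i l * p l *
        QK d u n (fun m => x m - (if m = j then 1 else 0) + if m = l then 1 else 0) =
      coeff (Finsupp.equivFunOnFinite.symm n)
        ((if i = 0 then 1 else X i) * krawtchoukGen u (fun m => x m - if m = j then 1 else 0)) := by
  simp only [QK_eq_coeff_krawtchoukGen, krawtchoukGen_add_single]
  rw [← sum_C_mul_krawtchoukFactor u hu0 horth, sum_mul, coeff_sum]
  exact sum_congr rfl fun l _ => by rw [mul_assoc (C _), coeff_C_mul]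

theorem sum_mul_QK_sub_single {n : Fin d → ℕ} (hn0 : n 0 = 0) (x : Fin d → ℕ) :
    ∑ j, (x j : ℝ) * QK d u n (fun m => x m - if m = j then 1 else 0) =
      ((∑ j, x j : ℕ) - ∑ m, n m : ℝ) * QK d u n x := by
  have h := congrArg (coeff (Finsupp.equivFunOnFinite.symm n))
    (sum_X_mul_pderiv_krawtchoukGen u x)
  simp only [coeff_sum, coeff_X_mul_pderiv, coeff_smul, coeff_sub, smul_eq_mul,
    Finsupp.coe_equivFunOnFinite_symm, ← QK_eq_coeff_krawtchoukGen, ← sum_mul, mul_sub,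
    sum_sub_distrib] at h
  rw [sum_erase _ (by rw [hn0, Nat.cast_zero])] at h
  rw [Nat.cast_sum, Nat.cast_sum]
  linarith

theorem sum_mul_coeff_X_mul_krawtchoukGen_sub_single {i : Fin d} (hi : i ≠ 0)
    (n x : Fin d → ℕ) :
    ∑ j, (x j : ℝ) * u i j * coeff (Finsupp.equivFunOnFinite.symm n)
        (X i * krawtchoukGen u (fun m => x m - if m = j then 1 else 0)) =
      n i * QK d u n x := by
  have h := coeff_X_mul_pderiv (Finsupp.equivFunOnFinite.symm n) i (krawtchoukGen u x)
  rw [Finsupp.coe_equivFunOnFinite_symm, ← QK_eq_coeff_krawtchoukGen, pderiv_krawtchoukGen u hi,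
    mul_sum, coeff_sum] at h
  rw [← h]
  exact sum_congr rfl fun j _ => by rw [mul_smul_comm, coeff_smul, smul_eq_mul]

end Krawtchouk

theorem multivariate_krawtchouk_dual_recurrence_general
    (d N : ℕ) [NeZero d]
    (p : Fin d → ℝ)
    (u : Fin d → Fin d → ℝ) (hu0 : ∀ j, u 0 j = 1)
    (horth : ∀ l m, ∑ i, u l i * u m i * p i = if l = m then (1 : ℝ) else 0)
    (x : Fin d → ℕ) (hx : ∑ j, x j = N)
    (n : Fin d → ℕ) (hn0 : n 0 = 0) (hn : ∑ i, n i ≤ N)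
    (i : Fin d) :
    ((if i = 0 then N - ∑ m, n m else n i : ℕ) : ℝ) * QK d u n x =
      ∑ j, ∑ l,
        (x j : ℝ) * u i j * u i l * p l *
          QK d u n
            (fun m => x m - (if m = j then 1 else 0) + if m = l then 1 else 0) := by
  have hinner : ∀ j, ∑ l, (x j : ℝ) * u i j * u i l * p l *
        QK d u n (fun m => x m - (if m = j then 1 else 0) + if m = l then 1 else 0) =
      x j * u i j * coeff (Finsupp.equivFunOnFinite.symm n)
        ((if i = 0 then 1 else X i) * krawtchoukGen u (fun m => x m - if m = j then 1 else 0)) := by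
    intro j
    rw [← sum_mul_QK_sub_single_add_single u hu0 horth, mul_sum]
    exact sum_congr rfl fun l _ => by ring
  rw [sum_congr rfl fun j _ => hinner j]
  split_ifs with hi
  · subst hi
    simp only [hu0, mul_one, one_mul, ← QK_eq_coeff_krawtchoukGen]
    rw [sum_mul_QK_sub_single u hn0, hx, Nat.cast_sub hn, Nat.cast_sum]
  · exact (sum_mul_coeff_X_mul_krawtchoukGen_sub_single u hi n x).symm

/-- Dual recurrence for the multivariate Krawtchouk polynomials (u orthonormal on p):
`n_i Q_n(x;u) = ∑_{j,l} x_j u_j^{(i)} u_l^{(i)} p_l Q_n(x-e_j+e_l;u)`,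
where `n` is indexed by `n⁺ = (n₀,…,n_{d-1})` with `n₀ = N - |n|`. -/
theorem multivariate_krawtchouk_dual_recurrence
    (d N : ℕ) [NeZero d] (hd : 2 ≤ d)
    (p : Fin d → ℝ) (hp : ∀ j, 0 < p j) (hpsum : ∑ j, p j = 1)
    (u : Fin d → Fin d → ℝ) (hu0 : ∀ j, u 0 j = 1)
    (horth : ∀ l m, ∑ i, u l i * u m i * p i = if l = m then (1 : ℝ) else 0)
    (x : Fin d → ℕ) (hx : ∑ j, x j = N)
    (n : Fin d → ℕ) (hn0 : n 0 = 0) (hn : ∑ i, n i ≤ N)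
    (i : Fin d) :
    ((if i = 0 then N - ∑ m, n m else n i : ℕ) : ℝ) * QK d u n x =
      ∑ j, ∑ l,
        (x j : ℝ) * u i j * u i l * p l *
          QK d u n
            (fun m => x m - (if m = j then 1 else 0) + if m = l then 1 else 0) :=
  multivariate_krawtchouk_dual_recurrence_general d N p u hu0 horth x hx n hn0 hn i
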